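/- For every n ≥ 1 and b₁, b₂ ∈ [0,1], the matrix Lⁿ is stochastic: Lⁿ(i,j;k,l) ≥ 0 for all i,j,k,l ∈ {0,1}ⁿ, and for every i,j ∈ {0,1}ⁿ one has Σ_{k,l ∈ {0,1}ⁿ} Lⁿ(i,j;k,l) = 1. -/

import Mathlib

/-- Exponents of the indeterminates `b₁` (resp. `b₂`) appearing in a formal weight:
`e` for exponent zero (factor `1`), `pl` for the factor `bᵢ`, `mi` for the factor `1 - bᵢ`. -/
inductive Eps : Type
  | e : Eps
  | pl : Eps
  | mi : Eps
deriving DecidableEq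

instance : Fintype Eps :=
  ⟨{Eps.e, Eps.pl, Eps.mi}, fun x => by cases x <;> simp⟩

/-- The 10-element set of formal weights: `none` represents `0`, and `some (ε₁, ε₂)`
represents the monomial `f₁(ε₁) f₂(ε₂)`. -/
abbrev Wt : Type := Option (Eps × Eps)

/-- The join operation on exponents: `a ∨ a = a`, `e ∨ a = a ∨ e = a`, and the
clash `{+, −}` gives `none` (i.e. the factor `0`). -/
def Eps.vee : Eps → Eps → Option Eps
  | .e, a => some a
  | a, .e => some a
  | .pl, .pl => some .pl
  | .mi, .mi => some .mi
  | .pl, .mi => none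
  | .mi, .pl => none

/-- The Boolean-type product `*` on the formal weight set `Wt`. -/
def wmul : Wt → Wt → Wt
  | none, _ => none
  | _, none => none
  | some (a₁, a₂), some (c₁, c₂) =>
    match a₁.vee c₁, a₂.vee c₂ with
    | some x, some y => some (x, y)
    | _, _ => none

/-- Evaluation of an exponent of `b₁`: `f₁(e) = 1`, `f₁(+) = b₁`, `f₁(−) = 1 - b₁`. -/
def f1 (b1 : ℝ) : Eps → ℝ
  | .e => 1
  | .pl => b1
  | .mi => 1 - b1

/-- Evaluation of an exponent of `b₂`: `f₂(e) = 1`, `f₂(+) = b₂`, `f₂(−) = 1 - b₂`. -/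
def f2 (b2 : ℝ) : Eps → ℝ
  | .e => 1
  | .pl => b2
  | .mi => 1 - b2

/-- The evaluation map `ev_{b₁,b₂} : W → ℝ`. -/
def ev (b1 b2 : ℝ) : Wt → ℝ
  | none => 0
  | some (x, y) => f1 b1 x * f2 b2 y

/-- The formal one-colored vertex weights `L̂¹(i, j; k, l) ∈ W`
(`i` = bottom input, `j` = left input, `k` = top output, `l` = right output,
with `true` standing for `1`). -/
def Lhat1 : Bool → Bool → Bool → Bool → Wt
  | true, false, true, false => some (.e, .e)
  | false, true, false, true => some (.e, .e)
  | false, false, false, false => some (.e, .pl)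
  | false, false, true, true => some (.e, .mi)
  | true, true, true, true => some (.pl, .e)
  | true, true, false, false => some (.mi, .e)
  | _, _, _, _ => none

/-- The `r`-fold projection `s_r(x) = (x₁ + ⋯ + x_r) mod 2` of a vector `x ∈ {0,1}ⁿ`
(here `r : Fin n` stands for the `1`-indexed level `r + 1`). -/
def sproj {n : ℕ} (x : Fin n → Bool) (r : Fin n) : Bool :=
  decide ((∑ t ∈ Finset.univ.filter (fun t : Fin n => t ≤ r),
    (if x t then (1 : ℕ) else 0)) % 2 = 1)

/-- The formal `n`-colored vertex weight
`L̂ⁿ(i, j; k, l) = ∏*_{r=1}^n L̂¹(s_r(i), s_r(j); s_r(k), s_r(l)) ∈ W`,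
where the product is taken with respect to the Boolean-type product `*`. -/
def Lhatn {n : ℕ} (i j k l : Fin n → Bool) : Wt :=
  (List.ofFn (fun r : Fin n =>
    Lhat1 (sproj i r) (sproj j r) (sproj k r) (sproj l r))).foldr wmul (some (.e, .e))

/-- The real `n`-colored vertex weight `Lⁿ(i, j; k, l) = ev_{b₁,b₂}(L̂ⁿ(i, j; k, l))`. -/
def Ln (b1 b2 : ℝ) {n : ℕ} (i j k l : Fin n → Bool) : ℝ :=
  ev b1 b2 (Lhatn i j k l)

/-!
For fixed inputs, the outputs of nonzero one-colored weight are either a single one of weight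
`(e, e)` or a pair of weights `(e, +), (e, −)` or `(+, e), (−, e)`. Multiplying a weight `w` by
both members of such a pair and evaluating returns `ev w` in total: if `w` already contains the
factor `bᵢ` or `1 - bᵢ`, one product reproduces `w` and the other vanishes, otherwise they give
`bᵢ · ev w` and `(1 - bᵢ) · ev w`. Summing the `∗`-product over all outputs, colour by colour from
the outermost factor in, therefore returns the value `1` of the empty product. Finally
`k ↦ (s_r(k))_r` is a bijection of `{0,1}ⁿ` (consecutive prefix parities recover `k`), so the
sums over `k, l` may be taken over the projected outputs instead.
-/

open Finset

lemma sum_fin_succ_pi {α M : Type*} [Fintype α] [AddCommMonoid M] {n : ℕ}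
    (g : (Fin (n + 1) → α) → M) :
    ∑ f, g f = ∑ a, ∑ f : Fin n → α, g (Fin.cons a f) := by
  rw [← (Fin.consEquiv fun _ => α).sum_comp, Fintype.sum_prod_type]
  rfl

section Weights

variable {b1 b2 : ℝ}

lemma f1_nonneg (hb : b1 ∈ Set.Icc (0 : ℝ) 1) (x : Eps) : 0 ≤ f1 b1 x := by
  cases x <;> simp only [f1] <;> linarith [hb.1, hb.2]

lemma f2_nonneg (hb : b2 ∈ Set.Icc (0 : ℝ) 1) (x : Eps) : 0 ≤ f2 b2 x := by
  cases x <;> simp only [f2] <;> linarith [hb.1, hb.2]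

lemma ev_nonneg (hb1 : b1 ∈ Set.Icc (0 : ℝ) 1) (hb2 : b2 ∈ Set.Icc (0 : ℝ) 1) (w : Wt) :
    0 ≤ ev b1 b2 w := by
  rcases w with _ | ⟨x, y⟩
  · exact le_rfl
  · exact mul_nonneg (f1_nonneg hb1 x) (f2_nonneg hb2 y)

@[simp]
lemma ev_none : ev b1 b2 none = 0 := rfl

@[simp]
lemma wmul_none_left (w : Wt) : wmul none w = none := rfl

@[simp]
lemma wmul_none_right (w : Wt) : wmul w none = none := by
  rcases w with _ | ⟨_, _⟩ <;> rfl

@[simp]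
lemma wmul_one_left (w : Wt) : wmul (some (.e, .e)) w = w := by
  rcases w with _ | ⟨x, y⟩ <;> rfl

lemma ev_wmul_pl_e_add_ev_wmul_mi_e (w : Wt) :
    ev b1 b2 (wmul (some (.pl, .e)) w) + ev b1 b2 (wmul (some (.mi, .e)) w) = ev b1 b2 w := by
  rcases w with _ | ⟨x, y⟩
  · simp only [wmul_none_right, ev_none, add_zero]
  · cases x <;> cases y <;> simp [wmul, Eps.vee, ev, f1, f2] <;> ring

lemma ev_wmul_e_pl_add_ev_wmul_e_mi (w : Wt) :
    ev b1 b2 (wmul (some (.e, .pl)) w) + ev b1 b2 (wmul (some (.e, .mi)) w) = ev b1 b2 w := by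
  rcases w with _ | ⟨x, y⟩
  · simp only [wmul_none_right, ev_none, add_zero]
  · cases x <;> cases y <;> simp [wmul, Eps.vee, ev, f1, f2] <;> ring

lemma sum_ev_wmul_Lhat1 (p q : Bool) (w : Wt) :
    ∑ a, ∑ c, ev b1 b2 (wmul (Lhat1 p q a c) w) = ev b1 b2 w := by
  cases p <;> cases q <;>
    simp only [Fintype.sum_bool, Lhat1, wmul_none_left, wmul_one_left, ev_none, add_zero,
      zero_add] <;>
    linarith [ev_wmul_pl_e_add_ev_wmul_mi_e (b1 := b1) (b2 := b2) w,
      ev_wmul_e_pl_add_ev_wmul_e_mi (b1 := b1) (b2 := b2) w]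

end Weights

def Lhat1Prod {n : ℕ} (p q a c : Fin n → Bool) (w : Wt) : Wt :=
  (List.ofFn fun r => Lhat1 (p r) (q r) (a r) (c r)).foldr wmul w

lemma Lhat1Prod_succ {n : ℕ} (p q a c : Fin (n + 1) → Bool) (w : Wt) :
    Lhat1Prod p q a c w = wmul (Lhat1 (p 0) (q 0) (a 0) (c 0))
      (Lhat1Prod (Fin.tail p) (Fin.tail q) (Fin.tail a) (Fin.tail c) w) := by
  simp only [Lhat1Prod, List.ofFn_succ, List.foldr_cons, Fin.tail]

lemma sum_ev_Lhat1Prod (b1 b2 : ℝ) {n : ℕ} (p q : Fin n → Bool) (w : Wt) :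
    ∑ a, ∑ c, ev b1 b2 (Lhat1Prod p q a c w) = ev b1 b2 w := by
  induction n with
  | zero => simp [Lhat1Prod]
  | succ n ih =>
    calc ∑ a, ∑ c, ev b1 b2 (Lhat1Prod p q a c w)
        = ∑ a₀, ∑ a, ∑ c₀, ∑ c, ev b1 b2 (wmul (Lhat1 (p 0) (q 0) a₀ c₀)
            (Lhat1Prod (Fin.tail p) (Fin.tail q) a c w)) := by
          simp only [sum_fin_succ_pi, Lhat1Prod_succ, Fin.cons_zero, Fin.tail_cons]
      _ = ∑ a, ∑ c, ∑ a₀, ∑ c₀, ev b1 b2 (wmul (Lhat1 (p 0) (q 0) a₀ c₀)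
            (Lhat1Prod (Fin.tail p) (Fin.tail q) a c w)) := by
          rw [sum_comm]
          exact sum_congr rfl fun a _ =>
            (sum_congr rfl fun a₀ _ => sum_comm).trans sum_comm
      _ = ev b1 b2 w := by simp only [sum_ev_wmul_Lhat1, ih]

section Sproj

variable {n : ℕ}

lemma sproj_zero (x : Fin n → Bool) (h : 0 < n) : sproj x ⟨0, h⟩ = x ⟨0, h⟩ := by
  have hIic : univ.filter (fun t : Fin n => t ≤ ⟨0, h⟩) = {⟨0, h⟩} := by
    ext t
    simp [Fin.le_def, Fin.ext_iff]
  rw [sproj, hIic, sum_singleton]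
  cases x ⟨0, h⟩ <;> rfl

lemma sproj_succ (x : Fin n → Bool) (m : ℕ) (h : m + 1 < n) :
    sproj x ⟨m + 1, h⟩ = xor (x ⟨m + 1, h⟩) (sproj x ⟨m, Nat.lt_of_succ_lt h⟩) := by
  have hIic : univ.filter (fun t : Fin n => t ≤ ⟨m + 1, h⟩)
      = insert ⟨m + 1, h⟩ (univ.filter fun t : Fin n => t ≤ ⟨m, Nat.lt_of_succ_lt h⟩) := by
    ext t
    simp only [mem_filter, mem_univ, true_and, mem_insert, Fin.le_def, Fin.ext_iff]
    omega
  rw [sproj, sproj, hIic, sum_insert (by simp [Fin.le_def])]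
  generalize ∑ t ∈ _, (if x t then 1 else 0) = s
  cases x ⟨m + 1, h⟩ <;> by_cases hs : s % 2 = 1 <;> simp [hs] <;> omega

lemma sproj_injective : Function.Injective (sproj (n := n)) := by
  intro x y hxy
  funext ⟨m, hm⟩
  cases m with
  | zero => simpa only [sproj_zero] using congrFun hxy ⟨0, hm⟩
  | succ m =>
    have h := congrFun hxy ⟨m + 1, hm⟩
    rwa [sproj_succ, sproj_succ, congrFun hxy, Bool.xor_left_inj] at h

end Sproj

lemma sum_sum_comp_sproj {M : Type*} [AddCommMonoid M] {n : ℕ}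
    (g : (Fin n → Bool) → (Fin n → Bool) → M) :
    ∑ k, ∑ l, g (sproj k) (sproj l) = ∑ a, ∑ c, g a c := by
  have hsproj : Function.Bijective (sproj (n := n)) := sproj_injective.bijective_of_finite
  calc ∑ k, ∑ l, g (sproj k) (sproj l)
      = ∑ k, ∑ c, g (sproj k) c := sum_congr rfl fun k _ => hsproj.sum_comp (g (sproj k))
    _ = ∑ a, ∑ c, g a c := hsproj.sum_comp fun a => ∑ c, g a c

theorem Ln_stochastic_general (n : ℕ)
    (b1 b2 : ℝ) (hb1 : b1 ∈ Set.Icc (0 : ℝ) 1) (hb2 : b2 ∈ Set.Icc (0 : ℝ) 1) :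
    (∀ i j k l : Fin n → Bool, 0 ≤ Ln b1 b2 i j k l) ∧
    (∀ i j : Fin n → Bool,
      ∑ k : Fin n → Bool, ∑ l : Fin n → Bool, Ln b1 b2 i j k l = 1) := by
  refine ⟨fun i j k l => ev_nonneg hb1 hb2 _, fun i j => ?_⟩
  calc ∑ k, ∑ l, Ln b1 b2 i j k l
      = ∑ a, ∑ c, ev b1 b2 (Lhat1Prod (sproj i) (sproj j) a c (some (.e, .e))) :=
        sum_sum_comp_sproj fun a c => ev b1 b2 (Lhat1Prod (sproj i) (sproj j) a c _)
    _ = ev b1 b2 (some (.e, .e)) := sum_ev_Lhat1Prod b1 b2 _ _ _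
    _ = 1 := mul_one 1

/-- Stochasticity of the matrices `Lⁿ`: for `b₁, b₂ ∈ [0,1]`, all entries are nonnegative
and, for any input lines `i, j ∈ {0,1}ⁿ`, the weights of all possible output lines sum to 1. -/
theorem Ln_stochastic (n : ℕ) (hn : 1 ≤ n)
    (b1 b2 : ℝ) (hb1 : b1 ∈ Set.Icc (0 : ℝ) 1) (hb2 : b2 ∈ Set.Icc (0 : ℝ) 1) :
    (∀ i j k l : Fin n → Bool, 0 ≤ Ln b1 b2 i j k l) ∧
    (∀ i j : Fin n → Bool,
      ∑ k : Fin n → Bool, ∑ l : Fin n → Bool, Ln b1 b2 i j k l = 1) :=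
  Ln_stochastic_general n b1 b2 hb1 hb2
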